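/- Selection-backdoor recovery with unbiased covariate data: suppose Z is backdoor admissible for (X, Y) so that P(Y = y | do(X = x)) = Σ_z P(Y = y | X = x, Z = z) P(Z = z), and suppose additionally that Y ⟂ S | {X, Z}. Then P(Y = y | do(X = x)) = Σ_z P(Y = y | X = x, Z = z, S = 1) · P(Z = z), i.e., the effect is computable from selection-biased conditional data together with the unbiased marginal of Z. -/

import Mathlib

open scoped Classical

/-- Probability of event `E` under weight function `p` on a finite sample space. -/
noncomputable def Pr {Ω : Type*} [Fintype Ω] (p : Ω → ℝ) (E : Ω → Prop) : ℝ :=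
  ∑ ω : Ω, if E ω then p ω else 0

/-- Conditional probability of `E` given `F`. -/
noncomputable def cPr {Ω : Type*} [Fintype Ω] (p : Ω → ℝ) (E F : Ω → Prop) : ℝ :=
  Pr p (fun ω => E ω ∧ F ω) / Pr p F

section Probability

variable {Ω : Type*} [Fintype Ω] {p : Ω → ℝ} {E F G H : Ω → Prop}

theorem Pr_nonneg (hp : ∀ ω, 0 ≤ p ω) (E : Ω → Prop) : 0 ≤ Pr p E :=
  Finset.sum_nonneg fun ω _ => by split_ifs <;> simp [hp ω]

theorem Pr_mono (hp : ∀ ω, 0 ≤ p ω) (h : ∀ ω, E ω → F ω) : Pr p E ≤ Pr p F :=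
  Finset.sum_le_sum fun ω _ => by
    by_cases hE : E ω
    · simp [hE, h ω hE]
    · simp only [hE, if_false]; split_ifs <;> simp [hp ω]

theorem Pr_congr (h : ∀ ω, E ω ↔ F ω) : Pr p E = Pr p F := by
  simp only [Pr, h]

theorem cPr_inter_eq_div (hH : ∀ ω, H ω ↔ F ω ∧ G ω) (hF : Pr p F ≠ 0) :
    cPr p E H = cPr p (fun ω => E ω ∧ G ω) F / cPr p G F := by
  have hEH : Pr p (fun ω => E ω ∧ H ω) = Pr p (fun ω => (E ω ∧ G ω) ∧ F ω) :=
    Pr_congr fun ω => by rw [hH]; tauto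
  have hGF : Pr p H = Pr p (fun ω => G ω ∧ F ω) :=
    Pr_congr fun ω => by rw [hH]; exact and_comm
  rw [cPr, cPr, cPr, hEH, hGF, div_div_div_cancel_right₀ hF]

theorem cPr_inter_eq_of_condIndep (hp : ∀ ω, 0 ≤ p ω) (hH : ∀ ω, H ω ↔ F ω ∧ G ω)
    (hci : cPr p (fun ω => E ω ∧ G ω) F = cPr p E F * cPr p G F) (hH_pos : 0 < Pr p H) :
    cPr p E H = cPr p E F := by
  have hF : 0 < Pr p F := hH_pos.trans_le (Pr_mono hp fun ω h => ((hH ω).1 h).1)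
  have hG : cPr p G F ≠ 0 :=
    div_ne_zero (by rw [← Pr_congr fun ω => (hH ω).trans and_comm]; exact hH_pos.ne') hF.ne'
  rw [cPr_inter_eq_div hH hF.ne', hci, mul_div_cancel_right₀ _ hG]

end Probability

theorem selection_backdoor_recovery_general
    {Ω 𝒳 𝒴 𝒵 : Type*} [Fintype Ω] [Fintype 𝒵]
    (p : Ω → ℝ) (hp : ∀ ω, 0 ≤ p ω)
    (X : Ω → 𝒳) (Y : Ω → 𝒴) (Z : Ω → 𝒵) (S : Ω → ℕ)
    (x : 𝒳) (y : 𝒴)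
    (Pdo : ℝ)  -- the interventional quantity P(Y = y | do(X = x))
    (hadjust : Pdo = ∑ z : 𝒵, cPr p (fun ω => Y ω = y) (fun ω => X ω = x ∧ Z ω = z)
        * Pr p (fun ω => Z ω = z))
    (hci : ∀ z : 𝒵,
      cPr p (fun ω => Y ω = y ∧ S ω = 1) (fun ω => X ω = x ∧ Z ω = z)
        = cPr p (fun ω => Y ω = y) (fun ω => X ω = x ∧ Z ω = z)
          * cPr p (fun ω => S ω = 1) (fun ω => X ω = x ∧ Z ω = z))
    (hpos : ∀ z : 𝒵, 0 < Pr p (fun ω => Z ω = z) →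
      0 < Pr p (fun ω => X ω = x ∧ Z ω = z ∧ S ω = 1)) :
    Pdo = ∑ z : 𝒵, cPr p (fun ω => Y ω = y) (fun ω => X ω = x ∧ Z ω = z ∧ S ω = 1)
        * Pr p (fun ω => Z ω = z) := by
  rw [hadjust]
  refine Finset.sum_congr rfl fun z _ => ?_
  rcases (Pr_nonneg hp fun ω => Z ω = z).eq_or_lt with hz | hz
  · rw [← hz, mul_zero, mul_zero]
  · rw [cPr_inter_eq_of_condIndep hp (fun _ => and_assoc.symm) (hci z) (hpos z hz)]

/-- Selection-backdoor recovery: backdoor adjustment together with Y ⟂ S | {X, Z}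
allows computing the causal effect from selection-biased conditionals and the
unbiased marginal of Z. -/
theorem selection_backdoor_recovery
    {Ω 𝒳 𝒴 𝒵 : Type*} [Fintype Ω] [Fintype 𝒵]
    (p : Ω → ℝ) (hp : ∀ ω, 0 ≤ p ω) (hsum : ∑ ω, p ω = 1)
    (X : Ω → 𝒳) (Y : Ω → 𝒴) (Z : Ω → 𝒵) (S : Ω → ℕ)
    (hS01 : ∀ ω, S ω = 0 ∨ S ω = 1)
    (x : 𝒳) (y : 𝒴)
    (Pdo : ℝ)  -- the interventional quantity P(Y = y | do(X = x))
    (hadjust : Pdo = ∑ z : 𝒵, cPr p (fun ω => Y ω = y) (fun ω => X ω = x ∧ Z ω = z)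
        * Pr p (fun ω => Z ω = z))
    (hci : ∀ z : 𝒵,
      cPr p (fun ω => Y ω = y ∧ S ω = 1) (fun ω => X ω = x ∧ Z ω = z)
        = cPr p (fun ω => Y ω = y) (fun ω => X ω = x ∧ Z ω = z)
          * cPr p (fun ω => S ω = 1) (fun ω => X ω = x ∧ Z ω = z))
    (hpos : ∀ z : 𝒵, 0 < Pr p (fun ω => Z ω = z) →
      0 < Pr p (fun ω => X ω = x ∧ Z ω = z ∧ S ω = 1)) :
    Pdo = ∑ z : 𝒵, cPr p (fun ω => Y ω = y) (fun ω => X ω = x ∧ Z ω = z ∧ S ω = 1)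
        * Pr p (fun ω => Z ω = z) :=
  selection_backdoor_recovery_general p hp X Y Z S x y Pdo hadjust hci hpos
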